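/- There exists a finite rotation-puzzle instance 𝒜 over the three-color tile set T_3 (the NOT subpuzzle, simulating a NOT gate) with a designated input boundary edge at its bottom and a designated output boundary edge at its top, such that for each color c ∈ {blue, red} the instance 𝒜 has exactly one solution whose color at the input edge is c, and this solution has the other element of {blue, red} as its color at the output edge. -/

import Mathlib

/-- The three Tantrix colors used in the three-color tile set. -/
inductive Color where
  | red
  | yellow
  | blue
deriving DecidableEq

/-- A tile is its clockwise color sequence: a word of length 6 over the colors,
edges indexed `0, …, 5` clockwise. -/
abbrev Tile := Fin 6 → Color

/-- Cyclic rotation of a tile by `k` steps: edge `i` of the rotated tile carries the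
color of edge `i + k` of the original sequence. -/
def rotTile (k : Fin 6) (t : Tile) : Tile := fun i => t (i + k)

open Color in
/-- The three-color tile set `T₃`, consisting of the 14 color sequences
yrrbby, ryybbr, yrrybb, ryyrbb, brrbyy, yrbybr, rbyryb, brybyr, brbyyr, bybrry,
ryrbby, rbryyb, ybyrrb, yrybbr. -/
def T3 : Set Tile :=
  { ![yellow,red,red,blue,blue,yellow],
    ![red,yellow,yellow,blue,blue,red],
    ![yellow,red,red,yellow,blue,blue],
    ![red,yellow,yellow,red,blue,blue],
    ![blue,red,red,blue,yellow,yellow],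
    ![yellow,red,blue,yellow,blue,red],
    ![red,blue,yellow,red,yellow,blue],
    ![blue,red,yellow,blue,yellow,red],
    ![blue,red,blue,yellow,yellow,red],
    ![blue,yellow,blue,red,red,yellow],
    ![red,yellow,red,blue,blue,yellow],
    ![red,blue,red,yellow,yellow,blue],
    ![yellow,blue,yellow,red,red,blue],
    ![yellow,red,yellow,blue,blue,red] }

/-- The six neighbor offsets of the hexagonal layout of `ℤ²`, listed clockwise
starting from straight up; edge `i` of a tile at `x` is the edge shared with the
neighboring point `x + dirs i`, and opposite directions differ by `3` (mod 6).
Two points are neighbors exactly if their difference is one of these offsets. -/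
def dirs : Fin 6 → ℤ × ℤ := ![(0,1), (1,1), (1,0), (0,-1), (-1,-1), (-1,0)]

/-- A finite rotation-puzzle instance over the tile set `T3`:
a function from a finite set of points of `ℤ²` to `T3`. -/
structure Puzzle where
  tiles : ℤ × ℤ → Option Tile
  finite : {x | tiles x ≠ none}.Finite
  memT3 : ∀ x t, tiles x = some t → t ∈ T3

/-- `sol` is a solution of the instance `P`: it assigns to each occupied point a
cyclic rotation of the tile placed there, such that for every pair of neighboring
occupied points the two assigned sequences give the same color to their joint edge
(edge `d` of the tile at `x` is glued to edge `d + 3` of the tile at `x + dirs d`). -/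
def IsSolution (P : Puzzle) (sol : ℤ × ℤ → Option Tile) : Prop :=
  (∀ x, (P.tiles x = none → sol x = none) ∧
    (∀ t, P.tiles x = some t → ∃ k : Fin 6, sol x = some (rotTile k t))) ∧
  (∀ (x : ℤ × ℤ) (d : Fin 6) (s s' : Tile),
    sol x = some s → sol (x + dirs d) = some s' → s d = s' (d + 3))

/-- `(x, d)` is a boundary edge of `P`: the point `x` is occupied and its
neighbor in direction `d` is not. -/
def IsBoundary (P : Puzzle) (x : ℤ × ℤ) (d : Fin 6) : Prop :=
  P.tiles x ≠ none ∧ P.tiles (x + dirs d) = none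

/-- The solution `sol` has color `c` at the edge in direction `d` of the tile at `x`. -/
def SolColor (sol : ℤ × ℤ → Option Tile) (x : ℤ × ℤ) (d : Fin 6) (c : Color) : Prop :=
  ∃ s, sol x = some s ∧ s d = c

/-!
The gadget is a triangle of three pairwise adjacent tiles, `bybrry` at `(-1,0)`, `brrbyy` at
`(-1,1)` and `rbryyb` at `(0,1)`. A solution is the same as a triple of rotations satisfying the
three joint-edge equations, and running through the `6³` triples shows that prescribing blue
(red) at the bottom edge of the lowest tile leaves exactly one triple, which shows red (blue) at
the top edge of `(0,1)`.
-/

open Function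

section Placement

variable {n : ℕ} {pos : Fin n → ℤ × ℤ}

/-- The tile `s i` placed at the point `pos i`, and nothing elsewhere. -/
noncomputable def place (pos : Fin n → ℤ × ℤ) (s : Fin n → Tile) : ℤ × ℤ → Option Tile :=
  extend pos (fun i => some (s i)) fun _ => none

theorem place_apply (hpos : Injective pos) (s : Fin n → Tile) (i : Fin n) :
    place pos s (pos i) = some (s i) :=
  hpos.extend_apply _ _ i

theorem place_eq_none_iff (hpos : Injective pos) {s : Fin n → Tile} {x : ℤ × ℤ} :
    place pos s x = none ↔ ∀ i, pos i ≠ x := by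
  constructor
  · rintro hx i rfl
    simp [place_apply hpos] at hx
  · intro hx
    exact extend_apply' _ _ x fun ⟨i, hi⟩ => hx i hi

theorem place_eq_some_iff (hpos : Injective pos) {s : Fin n → Tile} {x : ℤ × ℤ} {u : Tile} :
    place pos s x = some u ↔ ∃ i, pos i = x ∧ s i = u := by
  constructor
  · intro hx
    by_contra! hne
    have hnone : place pos s x = none :=
      (place_eq_none_iff hpos).2 fun i hi => hne i hi (Option.some_injective _ <|
        (place_apply hpos s i).symm.trans (hi ▸ hx))
    simp [hnone] at hx
  · rintro ⟨i, rfl, rfl⟩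
    exact place_apply hpos s i

theorem solColor_place_iff (hpos : Injective pos) {s : Fin n → Tile} {i : Fin n} {d : Fin 6}
    {c : Color} : SolColor (place pos s) (pos i) d c ↔ s i d = c := by
  simp [SolColor, place_apply hpos]

noncomputable def placePuzzle (pos : Fin n → ℤ × ℤ) (hpos : Injective pos) (t : Fin n → Tile)
    (ht : ∀ i, t i ∈ T3) : Puzzle where
  tiles := place pos t
  finite := (Set.finite_range pos).subset fun x hx => by
    by_contra hmem
    exact hx <| (place_eq_none_iff hpos).2 fun i hi => hmem ⟨i, hi⟩
  memT3 x u hx := by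
    obtain ⟨i, -, rfl⟩ := (place_eq_some_iff hpos).1 hx
    exact ht i

theorem isBoundary_placePuzzle_iff (hpos : Injective pos) {t : Fin n → Tile}
    (ht : ∀ i, t i ∈ T3) {i : Fin n} {d : Fin 6} :
    IsBoundary (placePuzzle pos hpos t ht) (pos i) d ↔ ∀ j, pos j ≠ pos i + dirs d := by
  simp [IsBoundary, placePuzzle, place_apply hpos, place_eq_none_iff hpos]

def Glued (pos : Fin n → ℤ × ℤ) (s : Fin n → Tile) : Prop :=
  ∀ i j d, pos i + dirs d = pos j → s i d = s j (d + 3)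

theorem isSolution_placePuzzle_iff (hpos : Injective pos) {t : Fin n → Tile}
    (ht : ∀ i, t i ∈ T3) {sol : ℤ × ℤ → Option Tile} :
    IsSolution (placePuzzle pos hpos t ht) sol ↔
      ∃ k : Fin n → Fin 6, sol = place pos (fun i => rotTile (k i) (t i)) ∧
        Glued pos fun i => rotTile (k i) (t i) := by
  constructor
  · rintro ⟨hrot, hglue⟩
    choose k hk using fun i => (hrot (pos i)).2 (t i) (place_apply hpos t i)
    have hsol : sol = place pos fun i => rotTile (k i) (t i) := by
      funext x
      by_cases hx : ∃ i, pos i = x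
      · obtain ⟨i, rfl⟩ := hx
        rw [hk, place_apply hpos]
      · simp only [not_exists] at hx
        rw [(hrot x).1 ((place_eq_none_iff hpos).2 hx), (place_eq_none_iff hpos).2 hx]
    exact ⟨k, hsol, fun i j d hij => hglue (pos i) d _ _ (hk i) (hij ▸ hk j)⟩
  · rintro ⟨k, rfl, hglue⟩
    refine ⟨fun x => ⟨fun hx => ?_, fun u hx => ?_⟩, fun x d u u' hx hy => ?_⟩
    · exact (place_eq_none_iff hpos).2 ((place_eq_none_iff hpos).1 hx)
    · obtain ⟨i, rfl, rfl⟩ := (place_eq_some_iff hpos).1 hx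
      exact ⟨k i, place_apply hpos _ i⟩
    · obtain ⟨i, rfl, rfl⟩ := (place_eq_some_iff hpos).1 hx
      obtain ⟨j, hj, rfl⟩ := (place_eq_some_iff hpos).1 hy
      exact hglue i j d hj.symm

end Placement

section NotGate

open Color

def notPos : Fin 3 → ℤ × ℤ := ![(-1, 0), (-1, 1), (0, 1)]

theorem notPos_injective : Injective notPos := by
  decide

def notTiles : Fin 3 → Tile :=
  ![![blue, yellow, blue, red, red, yellow],
    ![blue, red, red, blue, yellow, yellow],
    ![red, blue, red, yellow, yellow, blue]]

theorem notTiles_mem_T3 (i : Fin 3) : notTiles i ∈ T3 := by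
  fin_cases i <;> simp [T3, notTiles]

noncomputable def notPuzzle : Puzzle :=
  placePuzzle notPos notPos_injective notTiles notTiles_mem_T3

theorem notPos_add_dirs_eq {i j : Fin 3} {d : Fin 6} (h : notPos i + dirs d = notPos j) :
    (i, j, d) ∈ [(0, 1, 0), (0, 2, 1), (1, 2, 2), (1, 0, 3), (2, 0, 4), (2, 1, 5)] := by
  revert i j d
  decide

theorem glued_notPos_iff {s : Fin 3 → Tile} :
    Glued notPos s ↔ s 0 0 = s 1 3 ∧ s 0 1 = s 2 4 ∧ s 1 2 = s 2 5 := by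
  constructor
  · intro h
    exact ⟨h 0 1 0 (by decide), h 0 2 1 (by decide), h 1 2 2 (by decide)⟩
  · rintro ⟨h01, h02, h12⟩ i j d hij
    have hijd := notPos_add_dirs_eq hij
    simp only [List.mem_cons, Prod.mk.injEq, List.not_mem_nil, or_false] at hijd
    rcases hijd with ⟨rfl, rfl, rfl⟩ | ⟨rfl, rfl, rfl⟩ | ⟨rfl, rfl, rfl⟩ | ⟨rfl, rfl, rfl⟩ |
      ⟨rfl, rfl, rfl⟩ | ⟨rfl, rfl, rfl⟩
    exacts [h01, h02, h12, h01.symm, h02.symm, h12.symm]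

def notRot (k : Fin 3 → Fin 6) : Fin 3 → Tile := fun i => rotTile (k i) (notTiles i)

/-- The rotations of the solution with color `c` at the input edge (`blue`, otherwise `red`). -/
def notRotation : Color → Fin 3 → Fin 6
  | blue => ![3, 4, 2]
  | _ => ![0, 3, 5]

theorem glued_notRot_iff (k : Fin 3 → Fin 6) {c : Color} (hc : c = blue ∨ c = red) :
    Glued notPos (notRot k) ∧ notRot k 0 3 = c ↔ notRot k = notRot (notRotation c) := by
  rw [glued_notPos_iff]
  revert k
  simp only [Fin.forall_fin_succ_pi, Fin.forall_fin_zero_pi]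
  rcases hc with rfl | rfl <;> decide

end NotGate

/-- the three-color NOT subpuzzle: input boundary edge at the bottom, output boundary edge at the top; for each color `c ∈ {blue, red}` there is exactly one solution with color `c` at the input edge, and it has the other element of `{blue, red}` at the output edge. -/
theorem three_color_NOT_subpuzzle :
    ∃ (P : Puzzle) (xIn xOut : ℤ × ℤ),
      IsBoundary P xIn 3 ∧ IsBoundary P xOut 0 ∧ xIn.2 < xOut.2 ∧
      ∀ c ∈ ({Color.blue, Color.red} : Set Color),
        ∃ sol : ℤ × ℤ → Option Tile,
          (IsSolution P sol ∧ SolColor sol xIn 3 c ∧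
            SolColor sol xOut 0 (if c = Color.blue then Color.red else Color.blue)) ∧
          (∀ sol' : ℤ × ℤ → Option Tile,
            IsSolution P sol' → SolColor sol' xIn 3 c → sol' = sol) := by
  have hsol {sol} := isSolution_placePuzzle_iff notPos_injective notTiles_mem_T3 (sol := sol)
  refine ⟨notPuzzle, notPos 0, notPos 2,
    (isBoundary_placePuzzle_iff notPos_injective notTiles_mem_T3).2 (by decide),
    (isBoundary_placePuzzle_iff notPos_injective notTiles_mem_T3).2 (by decide), by decide,
    fun c hc => ?_⟩
  replace hc : c = Color.blue ∨ c = Color.red := hc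
  have hglued := (glued_notRot_iff (notRotation c) hc).2 rfl
  refine ⟨place notPos (notRot (notRotation c)),
    ⟨hsol.2 ⟨_, rfl, hglued.1⟩, (solColor_place_iff notPos_injective).2 hglued.2,
      (solColor_place_iff notPos_injective).2 (by rcases hc with rfl | rfl <;> decide)⟩,
    fun sol' hsol' hin => ?_⟩
  obtain ⟨k, rfl, hk⟩ := hsol.1 hsol'
  exact congrArg (place notPos)
    ((glued_notRot_iff k hc).1 ⟨hk, (solColor_place_iff notPos_injective).1 hin⟩)
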